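/- For n ≥ 3 and any j ∈ H^m, the standard basis vector e_j of F_2^{n^m} lies in the span of all coordinatewise products c_m(i) ⋆ c_m(l) with wt(i) = wt(l) = m. Consequently Ber_n^{m−1}(m) ⋆ Ber_n^{m−1}(m) = F_2^{n^m}. -/
import Mathlib


open scoped BigOperators

/-- The `l`-th block (of length `n^m`) of a vector of length `n^(m+1)`,
where the first coordinate of the index tuple selects the block. -/
def blockAt (n m : ℕ) (l : Fin n) (v : (Fin (m + 1) → Fin n) → ZMod 2) :
    (Fin m → Fin n) → ZMod 2 :=
  fun j => v (Fin.cons l j)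

/-- Berman code `Ber_n^r(m) ⊆ F_2^{n^m}`, coordinates indexed by `H^m` with `H = Fin n`.
`Ber_n^m(m) = {0}`, `Ber_n^0(m)` is the single parity-check code, and for `1 ≤ r`,
a codeword is a concatenation `(v_0|…|v_{n-1})` with each block in `Ber_n^{r-1}(m-1)`
and the sum of the blocks in `Ber_n^r(m-1)`. -/
def Ber (n : ℕ) : ℕ → (m : ℕ) → Set ((Fin m → Fin n) → ZMod 2)
  | _, 0 => {0}
  | 0, (m + 1) => {c | ∑ i, c i = 0}
  | (r + 1), (m + 1) =>
      {v | (∀ l : Fin n, blockAt n m l v ∈ Ber n r m) ∧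
        (fun j => ∑ l : Fin n, v (Fin.cons l j)) ∈ Ber n (r + 1) m}

/-- Dual Berman code `B_n^r(m) ⊆ F_2^{n^m}`.
`B_n^m(m)` is the full space, `B_n^0(m)` is the repetition code, and for `1 ≤ r`,
a codeword is `(u+u_0|…|u+u_{n-2}|u)` with each `u_l ∈ B_n^{r-1}(m-1)` and `u ∈ B_n^r(m-1)`. -/
def DBer (n : ℕ) : ℕ → (m : ℕ) → Set ((Fin m → Fin n) → ZMod 2)
  | _, 0 => Set.univ
  | 0, (m + 1) => {c | ∃ a : ZMod 2, c = fun _ => a}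
  | (r + 1), (m + 1) =>
      {v | ∃ u ∈ DBer n (r + 1) m, ∃ w : Fin n → ((Fin m → Fin n) → ZMod 2),
        (∀ l, w l ∈ DBer n r m) ∧
        (∀ l : Fin n, blockAt n m l v = if l.val = n - 1 then u else u + w l)}

/-- Star product of two codes: the span of all coordinatewise products. -/
def starProd {ι : Type*} (C D : Set (ι → ZMod 2)) : Submodule (ZMod 2) (ι → ZMod 2) :=
  Submodule.span (ZMod 2) {x | ∃ c ∈ C, ∃ d ∈ D, x = c * d}

/-- Dual code w.r.t. the standard bilinear form. -/
def dualCode {ι : Type*} [Fintype ι] (C : Set (ι → ZMod 2)) : Set (ι → ZMod 2) :=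
  {x | ∀ c ∈ C, ∑ i, x i * c i = 0}

/-- Partial order on tuples: `j ⪯ i` iff `supp(j) ⊆ supp(i)` and `j` agrees with `i` on
`supp(j)`. -/
def preceq {n m : ℕ} (j i : Fin m → Fin n) : Prop :=
  ∀ s, (j s).val ≠ 0 → j s = i s

instance {n m : ℕ} (j i : Fin m → Fin n) : Decidable (preceq j i) := by
  unfold preceq; infer_instance

/-- Hamming weight of a tuple in `H^m`: the number of nonzero entries. -/
def tupleWt {n m : ℕ} (j : Fin m → Fin n) : ℕ :=
  (Finset.univ.filter fun s => (j s).val ≠ 0).card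

/-- The vector `c_m(i')`, the indicator of `{i : i ⪯ i'}`. -/
def cm {n m : ℕ} (i' : Fin m → Fin n) : (Fin m → Fin n) → ZMod 2 :=
  fun i => if preceq i i' then 1 else 0

/-- The vector `d_m(i')`, the indicator of `{i : i ⪰ i'}`. -/
def dm {n m : ℕ} (i' : Fin m → Fin n) : (Fin m → Fin n) → ZMod 2 :=
  fun i => if preceq i' i then 1 else 0

/-- Standard basis vector of `F_2^{n^m}` at coordinate `v`. -/
def eVec {n m : ℕ} (v : Fin m → Fin n) : (Fin m → Fin n) → ZMod 2 :=
  fun i => if i = v then 1 else 0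

section Aux

open Finset

lemma zero_mem_Ber (n : ℕ) : ∀ m r, (0 : (Fin m → Fin n) → ZMod 2) ∈ Ber n r m := by
  intro m
  induction m with
  | zero => intro r; cases r <;> simp [Ber]
  | succ m ih =>
    intro r
    cases r with
    | zero => simp [Ber]
    | succ r =>
      refine ⟨fun l => ?_, ?_⟩
      · have h : blockAt n m l (0 : (Fin (m+1) → Fin n) → ZMod 2) = 0 := rfl
        rw [h]; exact ih r
      · have h : (fun j => ∑ l : Fin n,
            (0 : (Fin (m+1) → Fin n) → ZMod 2) (Fin.cons l j)) = 0 := by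
          funext j; simp
        rw [h]; exact ih (r+1)

lemma preceq_cons {n m : ℕ} (l : Fin n) (k : Fin m → Fin n) (i : Fin (m+1) → Fin n) :
    preceq (Fin.cons l k) i ↔ ((l.val ≠ 0 → l = i 0) ∧ preceq k (fun s => i s.succ)) := by
  constructor
  · intro h
    refine ⟨fun hl => h 0 (by simpa using hl), fun s hs => ?_⟩
    have := h s.succ (by simpa using hs)
    simpa using this
  · rintro ⟨h0, hs⟩ s
    refine Fin.cases ?_ ?_ s
    · intro hl; simpa using h0 (by simpa using hl)
    · intro t ht; simpa using hs t (by simpa using ht)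

lemma filter_card_two {n : ℕ} (hn : 3 ≤ n) (b : Fin n) (hb : b.val ≠ 0) :
    (Finset.univ.filter fun a : Fin n => a.val = 0 ∨ a = b).card = 2 := by
  have h0 : (0:ℕ) < n := by omega
  have hne : (⟨0, h0⟩ : Fin n) ≠ b := by
    intro h; exact hb (by rw [← h])
  have h : (Finset.univ.filter fun a : Fin n => a.val = 0 ∨ a = b)
      = {(⟨0, h0⟩ : Fin n), b} := by
    ext a
    simp [Finset.mem_filter, Fin.ext_iff]
  rw [h, Finset.card_insert_of_notMem (by simpa using hne), Finset.card_singleton]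

lemma cm_mem_Ber (n : ℕ) (hn : 3 ≤ n) :
    ∀ m, ∀ i : Fin (m+1) → Fin n, (∀ s, (i s).val ≠ 0) →
      cm i ∈ Ber n m (m+1) := by
  intro m
  induction m with
  | zero =>
    intro i hi
    show ∑ t : Fin 1 → Fin n, cm i t = 0
    rw [← (Equiv.funUnique (Fin 1) (Fin n)).symm.sum_comp (fun t => cm i t)]
    have h : ∀ a : Fin n,
        cm i ((Equiv.funUnique (Fin 1) (Fin n)).symm a)
          = if a.val = 0 ∨ a = i 0 then (1 : ZMod 2) else 0 := by
      intro a
      have hval : ∀ s : Fin 1, (Equiv.funUnique (Fin 1) (Fin n)).symm a s = a := fun _ => rfl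
      have hp : preceq ((Equiv.funUnique (Fin 1) (Fin n)).symm a) i ↔ (a.val = 0 ∨ a = i 0) := by
        unfold preceq
        simp only [hval]
        constructor
        · intro h
          by_cases ha : a.val = 0
          · exact Or.inl ha
          · exact Or.inr (h 0 ha)
        · intro h s hs
          rcases h with h | h
          · exact absurd h hs
          · rw [h]
            congr 1
            exact Fin.ext (by omega)
      show (if preceq ((Equiv.funUnique (Fin 1) (Fin n)).symm a) i then (1 : ZMod 2) else 0) = _
      exact if_congr hp rfl rfl
    simp only [h]
    rw [Finset.sum_boole, filter_card_two hn (i 0) (hi 0)]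
    decide
  | succ m ih =>
    intro i hi
    have hblock : ∀ l : Fin n, (fun k => cm i (Fin.cons l k)) =
        (if l.val = 0 ∨ l = i 0 then cm (fun s => i s.succ) else 0) := by
      intro l
      funext k
      by_cases h0 : l.val = 0 ∨ l = i 0
      · have hcond : preceq (Fin.cons l k) i ↔ preceq k (fun s => i s.succ) := by
          rw [preceq_cons]; tauto
        simp [cm, hcond, h0]
      · have hcond : ¬ (l.val ≠ 0 → l = i 0) := by tauto
        have : ¬ preceq (Fin.cons l k) i := by
          rw [preceq_cons]; tauto
        simp [cm, this, h0]
    refine ⟨fun l => ?_, ?_⟩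
    · show (fun k => cm i (Fin.cons l k)) ∈ Ber n m (m+1)
      rw [hblock l]
      split_ifs
      · exact ih (fun s => i s.succ) (fun s => hi s.succ)
      · exact zero_mem_Ber n (m+1) m
    · have h : (fun k => ∑ l : Fin n, cm i (Fin.cons l k)) = 0 := by
        funext k
        have h2 : ∀ l : Fin n, cm i (Fin.cons l k)
            = if l.val = 0 ∨ l = i 0 then cm (fun s => i s.succ) k else 0 := by
          intro l
          have := congrFun (hblock l) k
          simpa [apply_ite (fun f : (Fin (m+1) → Fin n) → ZMod 2 => f k)] using this
        simp only [h2, Pi.zero_apply]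
        rw [← Finset.sum_filter, Finset.sum_const, filter_card_two hn (i 0) (hi 0)]
        have h3 : ∀ c : ZMod 2, 2 • c = 0 := by decide
        exact h3 _
      rw [h]
      exact zero_mem_Ber n (m+1) (m+1)

end Aux

section Aux2

lemma tupleWt_eq_of_all {n m : ℕ} (i : Fin m → Fin n) (h : ∀ s, (i s).val ≠ 0) :
    tupleWt i = m := by
  unfold tupleWt
  rw [Finset.filter_true_of_mem (fun s _ => h s), Finset.card_univ, Fintype.card_fin]

lemma all_of_tupleWt_eq {n m : ℕ} (i : Fin m → Fin n) (h : tupleWt i = m) :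
    ∀ s, (i s).val ≠ 0 := by
  have huniv : (Finset.univ.filter fun s => (i s).val ≠ 0) = Finset.univ := by
    apply Finset.eq_univ_of_card
    rw [Fintype.card_fin]
    exact h
  intro s
  have hs : s ∈ Finset.univ.filter fun s => (i s).val ≠ 0 := by
    rw [huniv]; exact Finset.mem_univ s
  exact (Finset.mem_filter.mp hs).2

lemma eVec_mem_span (n m : ℕ) (hn : 3 ≤ n) (j : Fin m → Fin n) :
    eVec j ∈ Submodule.span (ZMod 2)
      {x : (Fin m → Fin n) → ZMod 2 |
        ∃ i l : Fin m → Fin n, tupleWt i = m ∧ tupleWt l = m ∧ x = cm i * cm l} := by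
  classical
  have h1 : (1:ℕ) < n := by omega
  have h2 : (2:ℕ) < n := by omega
  set T : Finset (Fin m) := Finset.univ.filter fun s => (j s).val ≠ 0 with hT
  set iS : Finset (Fin m) → (Fin m → Fin n) :=
    fun S s => if s ∈ S then j s else ⟨1, h1⟩ with hiS
  set lS : Finset (Fin m) → (Fin m → Fin n) :=
    fun S s => if s ∈ S then j s else ⟨2, h2⟩ with hlS
  have key : eVec j = ∑ S ∈ T.powerset, cm (iS S) * cm (lS S) := by
    funext k
    set K : Finset (Fin m) := Finset.univ.filter fun s => (k s).val ≠ 0 with hK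
    have hmul : ∀ S, (cm (iS S) * cm (lS S)) k
        = if preceq k (iS S) ∧ preceq k (lS S) then (1 : ZMod 2) else 0 := by
      intro S
      show cm (iS S) k * cm (lS S) k = _
      unfold cm
      split_ifs with hA hB hB <;> simp_all
    have hQ : ∀ S ∈ T.powerset, ((preceq k (iS S) ∧ preceq k (lS S)) ↔
        (preceq k j ∧ K ⊆ S)) := by
      intro S _
      constructor
      · rintro ⟨hA, hB⟩
        have hmem : ∀ s, (k s).val ≠ 0 → s ∈ S ∧ k s = j s := by
          intro s hs
          have hA' := hA s hs
          have hB' := hB s hs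
          by_cases hsS : s ∈ S
          · refine ⟨hsS, ?_⟩
            rw [hA']
            simp only [hiS, hsS, if_pos]
          · exfalso
            rw [hA'] at hB'
            simp only [hiS, hlS, hsS, if_neg, if_neg (by exact hsS)] at hB'
            exact absurd (congrArg Fin.val hB') (by simp)
        refine ⟨fun s hs => (hmem s hs).2, fun s hs => ?_⟩
        rw [hK, Finset.mem_filter] at hs
        exact (hmem s hs.2).1
      · rintro ⟨hkj, hKS⟩
        have hmem : ∀ s, (k s).val ≠ 0 → s ∈ S := by
          intro s hs
          exact hKS (by rw [hK]; exact Finset.mem_filter.mpr ⟨Finset.mem_univ s, hs⟩)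
        constructor <;> intro s hs <;>
          · rw [hkj s hs]
            simp [hiS, hlS, hmem s hs]
    have hsum : ∑ S ∈ T.powerset, (cm (iS S) * cm (lS S)) k
        = ((T.powerset.filter fun S => preceq k j ∧ K ⊆ S).card : ZMod 2) := by
      rw [← Finset.sum_boole]
      rw [Finset.sum_congr rfl fun S hS => by rw [hmul S, if_congr (hQ S hS) rfl rfl]]
    rw [Finset.sum_apply]
    rw [hsum]
    by_cases hkj : preceq k j
    · have hKT : K ⊆ T := by
        intro s hs
        rw [hK, Finset.mem_filter] at hs
        rw [hT, Finset.mem_filter]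
        refine ⟨Finset.mem_univ s, ?_⟩
        rw [← hkj s hs.2]
        exact hs.2
      have hfe : (T.powerset.filter fun S => preceq k j ∧ K ⊆ S)
          = Finset.Icc K T := by
        rw [Finset.Icc_eq_filter_powerset]
        apply Finset.filter_congr
        intro S _
        simp [hkj]
      rw [hfe, Finset.card_Icc_finset hKT]
      by_cases hkeq : k = j
      · subst hkeq
        have : K = T := by rw [hK, hT]
        rw [this, Nat.sub_self, pow_zero]
        simp [eVec]
      · have hKne : K ≠ T := by
          intro hKTeq
          apply hkeq
          funext s
          by_cases hs : (k s).val ≠ 0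
          · exact hkj s hs
          · have hsT : s ∉ T := by
              rw [← hKTeq, hK, Finset.mem_filter]
              tauto
            rw [hT, Finset.mem_filter] at hsT
            push_neg at hs hsT
            exact Fin.ext (by rw [hs, hsT (Finset.mem_univ s)])
        have hlt : K.card < T.card := Finset.card_lt_card (ssubset_of_subset_of_ne hKT hKne)
        have hpos : T.card - K.card ≠ 0 := by omega
        rw [Nat.cast_pow]
        have h20 : ((2:ℕ) : ZMod 2) = 0 := by decide
        rw [h20, zero_pow hpos]
        simp [eVec, hkeq]
    · have hfe : (T.powerset.filter fun S => preceq k j ∧ K ⊆ S) = ∅ := by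
        apply Finset.filter_false_of_mem
        intro S _
        tauto
      have hkeq : k ≠ j := by
        intro h; subst h; exact hkj (fun s _ => rfl)
      rw [hfe]
      simp [eVec, hkeq]
  rw [key]
  refine Submodule.sum_mem _ fun S hS => Submodule.subset_span ?_
  have hST : S ⊆ T := Finset.mem_powerset.mp hS
  refine ⟨iS S, lS S, ?_, ?_, rfl⟩
  · apply tupleWt_eq_of_all
    intro s
    simp only [hiS]
    split_ifs with h
    · exact (Finset.mem_filter.mp (hST h)).2
    · simp
  · apply tupleWt_eq_of_all
    intro s
    simp only [hlS]
    split_ifs with h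
    · exact (Finset.mem_filter.mp (hST h)).2
    · simp

end Aux2

/-- for `n ≥ 3`, every standard basis vector `e_j` of `F_2^{n^m}` lies in the
span of the products `c_m(i) ⋆ c_m(l)` with `wt(i) = wt(l) = m`; consequently
`Ber_n^{m-1}(m) ⋆ Ber_n^{m-1}(m) = F_2^{n^m}`. -/
theorem stmt18 (n m : ℕ) (hn : 3 ≤ n) (hm : 1 ≤ m) :
    (∀ j : Fin m → Fin n,
      eVec j ∈ Submodule.span (ZMod 2)
        {x : (Fin m → Fin n) → ZMod 2 |
          ∃ i l : Fin m → Fin n, tupleWt i = m ∧ tupleWt l = m ∧ x = cm i * cm l}) ∧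
    (starProd (Ber n (m - 1) m) (Ber n (m - 1) m) :
      Set ((Fin m → Fin n) → ZMod 2)) = Set.univ := by
  refine ⟨fun j => eVec_mem_span n m hn j, ?_⟩
  have hsub : {x : (Fin m → Fin n) → ZMod 2 |
      ∃ i l : Fin m → Fin n, tupleWt i = m ∧ tupleWt l = m ∧ x = cm i * cm l} ⊆
      {x | ∃ c ∈ Ber n (m-1) m, ∃ d ∈ Ber n (m-1) m, x = c * d} := by
    rintro x ⟨i, l, hi, hl, rfl⟩
    obtain ⟨m', rfl⟩ : ∃ m', m = m' + 1 := ⟨m - 1, by omega⟩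
    refine ⟨cm i, ?_, cm l, ?_, rfl⟩
    · simpa using cm_mem_Ber n hn m' i (all_of_tupleWt_eq i hi)
    · simpa using cm_mem_Ber n hn m' l (all_of_tupleWt_eq l hl)
  have htop : starProd (Ber n (m-1) m) (Ber n (m-1) m) = ⊤ := by
    rw [eq_top_iff]
    intro x _
    have hx : x = ∑ j : Fin m → Fin n, x j • eVec j := by
      funext k
      simp [eVec, Finset.sum_apply, mul_ite, mul_one, mul_zero]
    rw [hx]
    refine Submodule.sum_mem _ fun j _ => Submodule.smul_mem _ _ ?_
    exact Submodule.span_mono hsub (eVec_mem_span n m hn j)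
  rw [htop]
  rfl
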